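/- Let X̂ = (V̂, Ŵ, b̂, k̂) and X = (V, W, b, k) be labelled graphs (with rational labels k and nonzero integer labels b), and let q : X̂ → X be a covering of labelled graphs with local degrees d : V̂ → ℤ_{>0}; that is: q maps V̂ onto V and Ŵ to W with q(-l) = -q(l) and q(l⁻) = q(l)⁻ for all l ∈ Ŵ; for every u ∈ V̂ and every w ∈ ∂q(u) the number of edge-ends l ∈ ∂u with q(l) = w equals d_u; k̂_u = k_{q(u)} · d_u for all u ∈ V̂; and b̂_l = b_{q(l)} for all l ∈ Ŵ. Suppose x : V̂ → ℝ and μ : Ŵ → ℝ satisfy the real BKN-equation over X̂, with x_u ≥ 0 for all u, x not identically zero, |μ_l| ≤ 1 for all l, and μ_{-l} = μ_l for all l. Then there exist t : V → ℝ and λ : W → ℝ satisfying the real BKN-equation over X, with t_v ≥ 0 for all v, t not identically zero, |λ_w| ≤ 1 for all w, and λ_{-w} = λ_w for all w. Moreover, if x_u > 0 for every u ∈ V̂, then t_v > 0 for every v ∈ V. -/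

import Mathlib

open Finset

/-!
The descended solution is obtained by pushing the quadratic forms of `(x, μ)` forward along the
covering: `t_v² = ∑_{u ↦ v} d_u x_u²` and `S_w = ∑_{l ↦ w} μ_l x_{l⁻} x_{l⁺}`, and
`λ_w = S_w / (t_{w⁻} t_{w⁺})`. Since every `w ∈ ∂(q u)` has exactly `d_u` lifts at `u`, the
squares `x_{l⁻}²` (resp. `x_{l⁺}²`) summed over the lifts of `w` give `t_{w⁻}²` (resp. `t_{w⁺}²`),
so Cauchy–Schwarz and `|μ| ≤ 1` give `|S_w| ≤ t_{w⁻} t_{w⁺}`, i.e. `|λ| ≤ 1`. Multiplying the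
equation over `X̂` at `u` by `x_u` and summing over the fibre of `v` gives
`∑_{w ∈ ∂v} S_w / b_w = k_v t_v²`, which is the equation over `X` multiplied by `t_v`.
-/

section BaseGraph

variable {V W : Type*}

def IsBKNSolution [Fintype W] [DecidableEq V] (neg : W → W) (ini : W → V) (b : W → ℤ)
    (k : V → ℚ) (a : V → ℝ) (γ : W → ℝ) : Prop :=
  ∀ v, ∑ w with ini w = v, γ w * a (ini (neg w)) / (b w : ℝ) = (k v : ℝ) * a v

noncomputable def normalizedWeight (neg : W → W) (ini : W → V) (t : V → ℝ) (S : W → ℝ)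
    (w : W) : ℝ :=
  S w / (t (ini w) * t (ini (neg w)))

variable {neg : W → W} {ini : W → V} {t : V → ℝ} {S : W → ℝ}

theorem abs_normalizedWeight_le_one (hS : ∀ w, |S w| ≤ t (ini w) * t (ini (neg w))) (w : W) :
    |normalizedWeight neg ini t S w| ≤ 1 := by
  have hp : 0 ≤ t (ini w) * t (ini (neg w)) := (abs_nonneg _).trans (hS w)
  rw [normalizedWeight, abs_div, abs_of_nonneg hp]
  exact div_le_one_of_le₀ (hS w) hp

theorem normalizedWeight_neg (hinv : ∀ w, neg (neg w) = w) (hSneg : ∀ w, S (neg w) = S w)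
    (w : W) : normalizedWeight neg ini t S (neg w) = normalizedWeight neg ini t S w := by
  rw [normalizedWeight, normalizedWeight, hinv, hSneg, mul_comm]

theorem isBKNSolution_normalizedWeight [Fintype W] [DecidableEq V] (b : W → ℤ) (k : V → ℚ)
    (hS : ∀ w, |S w| ≤ t (ini w) * t (ini (neg w)))
    (hsum : ∀ v, ∑ w with ini w = v, S w / (b w : ℝ) = (k v : ℝ) * t v ^ 2) :
    IsBKNSolution neg ini b k t (normalizedWeight neg ini t S) := by
  intro v
  rcases eq_or_ne (t v) 0 with hv | hv
  · rw [hv, mul_zero]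
    refine sum_eq_zero fun w hw => ?_
    rw [normalizedWeight, (mem_filter.1 hw).2, hv, zero_mul, div_zero, zero_mul, zero_div]
  refine mul_right_cancel₀ hv ?_
  calc (∑ w with ini w = v, normalizedWeight neg ini t S w * t (ini (neg w)) / (b w : ℝ)) * t v
      = ∑ w with ini w = v, S w / (b w : ℝ) := by
        rw [sum_mul]
        refine sum_congr rfl fun w hw => ?_
        rw [← (mem_filter.1 hw).2]
        -- `S w / p * p = S w` also when `p = 0`, because then `S w = 0`
        have hcancel := div_mul_cancel_of_imp fun hp => abs_nonpos_iff.1 ((hS w).trans_eq hp)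
        rw [normalizedWeight]
        linear_combination hcancel / (b w : ℝ)
    _ = (k v : ℝ) * t v * t v := by rw [hsum v]; ring

end BaseGraph

section Covering

variable {V W Vh Wh : Type*}

noncomputable def fiberMass [Fintype Vh] [DecidableEq V] (qV : Vh → V) (d : Vh → ℤ)
    (x : Vh → ℝ) (v : V) : ℝ :=
  ∑ u with qV u = v, (d u : ℝ) * x u ^ 2

noncomputable def fiberCorrelation [Fintype Wh] [DecidableEq W] (negh : Wh → Wh)
    (inih : Wh → Vh) (qW : Wh → W) (μ : Wh → ℝ) (x : Vh → ℝ) (w : W) : ℝ :=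
  ∑ l with qW l = w, μ l * x (inih l) * x (inih (negh l))

variable {neg : W → W} {ini : W → V} {negh : Wh → Wh} {inih : Wh → Vh}
  {qV : Vh → V} {qW : Wh → W} {d : Vh → ℤ} {x : Vh → ℝ} {μ : Wh → ℝ}

theorem fiberMass_nonneg [Fintype Vh] [DecidableEq V] (hd : ∀ u, 0 ≤ d u) (v : V) :
    0 ≤ fiberMass qV d x v :=
  sum_nonneg fun u _ => mul_nonneg (Int.cast_nonneg (hd u)) (sq_nonneg _)

theorem fiberMass_pos [Fintype Vh] [DecidableEq V] (hd : ∀ u, 0 < d u) {u : Vh} (hu : x u ≠ 0) :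
    0 < fiberMass qV d x (qV u) :=
  sum_pos' (fun u' _ => mul_nonneg (Int.cast_nonneg (hd u').le) (sq_nonneg _))
    ⟨u, by simp, mul_pos (Int.cast_pos.2 (hd u)) (sq_pos_of_ne_zero hu)⟩

theorem sum_fiber_comp_inih [Fintype Vh] [Fintype Wh] [DecidableEq V] [DecidableEq W]
    [DecidableEq Vh] {R : Type*} [Ring R] (hq_ini : ∀ l, qV (inih l) = ini (qW l))
    (hdeg : ∀ u : Vh, ∀ w : W, ini w = qV u →
      ((univ.filter (fun l => inih l = u ∧ qW l = w)).card : ℤ) = d u)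
    (f : Vh → R) (w : W) :
    ∑ l with qW l = w, f (inih l) = ∑ u with qV u = ini w, (d u : R) * f u := by
  have hmaps : ∀ l ∈ univ.filter (fun l => qW l = w),
      inih l ∈ univ.filter (fun u => qV u = ini w) := fun l hl =>
    mem_filter.2 ⟨mem_univ _, by rw [hq_ini, (mem_filter.1 hl).2]⟩
  rw [← sum_fiberwise_of_maps_to' hmaps]
  refine sum_congr rfl fun u hu => ?_
  have hcard := congrArg (Int.cast : ℤ → R) (hdeg u w (mem_filter.1 hu).2.symm)
  rw [filter_filter, sum_const, nsmul_eq_mul, ← hcard]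
  simp_rw [and_comm, Int.cast_natCast]

theorem sum_fiber_comp_negh [Fintype Wh] [DecidableEq W] {R : Type*} [AddCommMonoid R]
    (hinv : ∀ w, neg (neg w) = w) (hinvh : ∀ l, negh (negh l) = l)
    (hq_neg : ∀ l, qW (negh l) = neg (qW l)) (f : Wh → R) (w : W) :
    ∑ l with qW l = w, f (negh l) = ∑ l with qW l = neg w, f l :=
  sum_nbij' negh negh
    (fun l hl => mem_filter.2 ⟨mem_univ _, by rw [hq_neg, (mem_filter.1 hl).2]⟩)
    (fun l hl => mem_filter.2 ⟨mem_univ _, by rw [hq_neg, (mem_filter.1 hl).2, hinv]⟩)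
    (fun l _ => hinvh l) (fun l _ => hinvh l) (fun _ _ => rfl)

theorem abs_fiberCorrelation_le [Fintype Vh] [Fintype Wh] [DecidableEq V] [DecidableEq W]
    [DecidableEq Vh] (hinv : ∀ w, neg (neg w) = w) (hinvh : ∀ l, negh (negh l) = l)
    (hq_neg : ∀ l, qW (negh l) = neg (qW l)) (hq_ini : ∀ l, qV (inih l) = ini (qW l))
    (hdeg : ∀ u : Vh, ∀ w : W, ini w = qV u →
      ((univ.filter (fun l => inih l = u ∧ qW l = w)).card : ℤ) = d u)
    (hμ : ∀ l, |μ l| ≤ 1) (w : W) :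
    |fiberCorrelation negh inih qW μ x w| ≤
      √(fiberMass qV d x (ini w)) * √(fiberMass qV d x (ini (neg w))) := by
  have hsq : ∀ w', ∑ l with qW l = w', |x (inih l)| ^ 2 =
      fiberMass qV d x (ini w') := fun w' => by
    simp only [sq_abs]
    exact sum_fiber_comp_inih hq_ini hdeg (fun u => x u ^ 2) w'
  calc |fiberCorrelation negh inih qW μ x w|
      ≤ ∑ l with qW l = w, |x (inih l)| * |x (inih (negh l))| := by
        refine (abs_sum_le_sum_abs _ _).trans (sum_le_sum fun l _ => ?_)
        rw [abs_mul, abs_mul, mul_assoc]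
        exact mul_le_of_le_one_left (by positivity) (hμ l)
    _ ≤ √(∑ l with qW l = w, |x (inih l)| ^ 2) *
          √(∑ l with qW l = w, |x (inih (negh l))| ^ 2) :=
        Real.sum_mul_le_sqrt_mul_sqrt _ _ _
    _ = _ := by
        rw [hsq, sum_fiber_comp_negh hinv hinvh hq_neg (fun l => |x (inih l)| ^ 2), hsq]

theorem fiberCorrelation_neg [Fintype Wh] [DecidableEq W] (hinv : ∀ w, neg (neg w) = w)
    (hinvh : ∀ l, negh (negh l) = l) (hq_neg : ∀ l, qW (negh l) = neg (qW l))
    (hμsym : ∀ l, μ (negh l) = μ l) (w : W) :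
    fiberCorrelation negh inih qW μ x (neg w) = fiberCorrelation negh inih qW μ x w := by
  rw [fiberCorrelation, ← sum_fiber_comp_negh hinv hinvh hq_neg]
  refine sum_congr rfl fun l _ => ?_
  rw [hμsym, hinvh, mul_right_comm]

theorem sum_fiberCorrelation_div [Fintype W] [Fintype Vh] [Fintype Wh] [DecidableEq V]
    [DecidableEq W] [DecidableEq Vh] {b : W → ℤ} {k : V → ℚ} {bh : Wh → ℤ} {kh : Vh → ℚ}
    (hq_ini : ∀ l, qV (inih l) = ini (qW l)) (hk : ∀ u, kh u = k (qV u) * (d u : ℚ))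
    (hbq : ∀ l, bh l = b (qW l)) (hsolh : IsBKNSolution negh inih bh kh x μ) (v : V) :
    ∑ w with ini w = v, fiberCorrelation negh inih qW μ x w / (b w : ℝ) =
      (k v : ℝ) * fiberMass qV d x v := by
  set g : Wh → ℝ := fun l => μ l * x (inih l) * x (inih (negh l)) / (bh l : ℝ)
  have hfibers : univ.filter (fun l => qW l ∈ univ.filter (fun w => ini w = v)) =
      univ.filter (fun l => inih l ∈ univ.filter (fun u => qV u = v)) := by
    ext l
    simp [hq_ini]
  calc ∑ w with ini w = v, fiberCorrelation negh inih qW μ x w / (b w : ℝ)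
      = ∑ w with ini w = v, ∑ l with qW l = w, g l := by
        refine sum_congr rfl fun w _ => ?_
        rw [fiberCorrelation, sum_div]
        refine sum_congr rfl fun l hl => ?_
        show _ = _ / (bh l : ℝ)
        rw [hbq, (mem_filter.1 hl).2]
    _ = ∑ u with qV u = v, ∑ l with inih l = u, g l := by
        rw [sum_fiberwise_eq_sum_filter, sum_fiberwise_eq_sum_filter, hfibers]
    _ = ∑ u with qV u = v, x u * ((kh u : ℝ) * x u) := by
        refine sum_congr rfl fun u _ => ?_
        rw [← hsolh u, mul_sum]
        refine sum_congr rfl fun l hl => ?_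
        rw [← (mem_filter.1 hl).2]
        ring
    _ = (k v : ℝ) * fiberMass qV d x v := by
        rw [fiberMass, mul_sum]
        refine sum_congr rfl fun u hu => ?_
        rw [hk, (mem_filter.1 hu).2]
        push_cast
        ring

end Covering

theorem stmt6_general {V W Vh Wh : Type*}
    [Fintype W] [Fintype Vh] [Fintype Wh]
    [DecidableEq V] [DecidableEq W] [DecidableEq Vh]
    -- the base labelled graph X
    (neg : W → W) (hinv : ∀ w, neg (neg w) = w)
    (ini : W → V)
    (b : W → ℤ)
    (k : V → ℚ)
    -- the covering labelled graph X̂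
    (negh : Wh → Wh) (hinvh : ∀ l, negh (negh l) = l)
    (inih : Wh → Vh)
    (bh : Wh → ℤ)
    (kh : Vh → ℚ)
    -- the covering map and its local degrees
    (qV : Vh → V) (qW : Wh → W) (d : Vh → ℤ)
    (hqV_surj : Function.Surjective qV)
    (hq_neg : ∀ l, qW (negh l) = neg (qW l))
    (hq_ini : ∀ l, qV (inih l) = ini (qW l))
    (hd_pos : ∀ u, 0 < d u)
    (hdeg : ∀ u : Vh, ∀ w : W, ini w = qV u →
      ((univ.filter (fun l => inih l = u ∧ qW l = w)).card : ℤ) = d u)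
    (hk : ∀ u, kh u = k (qV u) * (d u : ℚ))
    (hbq : ∀ l, bh l = b (qW l))
    -- a real solution of the BKN-equation over X̂
    (x : Vh → ℝ) (μ : Wh → ℝ)
    (hsolh : ∀ u, ∑ l ∈ univ.filter (fun l => inih l = u),
        μ l * x (inih (negh l)) / (bh l : ℝ) = (kh u : ℝ) * x u)
    (hx_ne : x ≠ 0)
    (hμ : ∀ l, |μ l| ≤ 1) (hμsym : ∀ l, μ (negh l) = μ l) :
    ∃ (t : V → ℝ) (lam : W → ℝ),
      (∀ v, ∑ w ∈ univ.filter (fun w => ini w = v),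
          lam w * t (ini (neg w)) / (b w : ℝ) = (k v : ℝ) * t v) ∧
        (∀ v, 0 ≤ t v) ∧ t ≠ 0 ∧
        (∀ w, |lam w| ≤ 1) ∧ (∀ w, lam (neg w) = lam w) ∧
        ((∀ u, 0 < x u) → ∀ v, 0 < t v) := by
  set t : V → ℝ := fun v => √(fiberMass qV d x v)
  set S := fiberCorrelation negh inih qW μ x
  have hS : ∀ w, |S w| ≤ t (ini w) * t (ini (neg w)) :=
    abs_fiberCorrelation_le hinv hinvh hq_neg hq_ini hdeg hμ
  have hsum : ∀ v, ∑ w with ini w = v, S w / (b w : ℝ) = (k v : ℝ) * t v ^ 2 := fun v => by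
    rw [Real.sq_sqrt (fiberMass_nonneg (fun u => (hd_pos u).le) v)]
    exact sum_fiberCorrelation_div hq_ini hk hbq hsolh v
  refine ⟨t, normalizedWeight neg ini t S, isBKNSolution_normalizedWeight b k hS hsum,
    fun v => Real.sqrt_nonneg _, ?_, abs_normalizedWeight_le_one hS,
    normalizedWeight_neg hinv (fiberCorrelation_neg hinv hinvh hq_neg hμsym), ?_⟩
  · obtain ⟨u, hu⟩ := Function.ne_iff.1 hx_ne
    exact Function.ne_iff.2 ⟨qV u, (Real.sqrt_pos.2 (fiberMass_pos hd_pos hu)).ne'⟩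
  · intro hx v
    obtain ⟨u, rfl⟩ := hqV_surj v
    exact Real.sqrt_pos.2 (fiberMass_pos hd_pos (hx u).ne')

/-- Descent of real BKN-solutions under a covering of labelled
graphs. `q = (qV, qW)` is a covering of the labelled graph `X = (V, W, b, k)`
by `X̂ = (V̂, Ŵ, b̂, k̂)` with local degrees `d : V̂ → ℤ_{>0}`: `qV` is onto,
`q` commutes with the involutions and initial-vertex maps, over each
`w ∈ ∂ (qV u)` there are exactly `d u` edge-ends in `∂u`, `k̂_u = k_{qV u} d_u`
and `b̂_l = b_{qW l}`. If `(x, μ)` solves the real BKN-equation over `X̂` with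
`x ≥ 0`, `x ≢ 0`, `|μ| ≤ 1`, `μ_{-l} = μ_l`, then there is a solution
`(t, λ)` of the real BKN-equation over `X` with `t ≥ 0`, `t ≢ 0`, `|λ| ≤ 1`,
`λ_{-w} = λ_w`; moreover if `x > 0` everywhere then `t > 0` everywhere. -/
theorem stmt6 {V W Vh Wh : Type*}
    [Fintype V] [Fintype W] [Fintype Vh] [Fintype Wh]
    [DecidableEq V] [DecidableEq W] [DecidableEq Vh]
    -- the base labelled graph X
    (neg : W → W) (hinv : ∀ w, neg (neg w) = w) (hfpf : ∀ w, neg w ≠ w)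
    (ini : W → V)
    (b : W → ℤ) (hb : ∀ w, b w ≠ 0) (hbneg : ∀ w, b (neg w) = b w)
    (k : V → ℚ)
    -- the covering labelled graph X̂
    (negh : Wh → Wh) (hinvh : ∀ l, negh (negh l) = l) (hfpfh : ∀ l, negh l ≠ l)
    (inih : Wh → Vh)
    (bh : Wh → ℤ) (hbh : ∀ l, bh l ≠ 0) (hbnegh : ∀ l, bh (negh l) = bh l)
    (kh : Vh → ℚ)
    -- the covering map and its local degrees
    (qV : Vh → V) (qW : Wh → W) (d : Vh → ℤ)
    (hqV_surj : Function.Surjective qV)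
    (hq_neg : ∀ l, qW (negh l) = neg (qW l))
    (hq_ini : ∀ l, qV (inih l) = ini (qW l))
    (hd_pos : ∀ u, 0 < d u)
    (hdeg : ∀ u : Vh, ∀ w : W, ini w = qV u →
      ((univ.filter (fun l => inih l = u ∧ qW l = w)).card : ℤ) = d u)
    (hk : ∀ u, kh u = k (qV u) * (d u : ℚ))
    (hbq : ∀ l, bh l = b (qW l))
    -- a real solution of the BKN-equation over X̂
    (x : Vh → ℝ) (μ : Wh → ℝ)
    (hsolh : ∀ u, ∑ l ∈ univ.filter (fun l => inih l = u),
        μ l * x (inih (negh l)) / (bh l : ℝ) = (kh u : ℝ) * x u)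
    (hx_nn : ∀ u, 0 ≤ x u) (hx_ne : x ≠ 0)
    (hμ : ∀ l, |μ l| ≤ 1) (hμsym : ∀ l, μ (negh l) = μ l) :
    ∃ (t : V → ℝ) (lam : W → ℝ),
      (∀ v, ∑ w ∈ univ.filter (fun w => ini w = v),
          lam w * t (ini (neg w)) / (b w : ℝ) = (k v : ℝ) * t v) ∧
        (∀ v, 0 ≤ t v) ∧ t ≠ 0 ∧
        (∀ w, |lam w| ≤ 1) ∧ (∀ w, lam (neg w) = lam w) ∧
        ((∀ u, 0 < x u) → ∀ v, 0 < t v) :=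
  stmt6_general neg hinv ini b k negh hinvh inih bh kh qV qW d hqV_surj hq_neg hq_ini hd_pos hdeg hk
    hbq x μ hsolh hx_ne hμ hμsym
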